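/- Suppose a hidden stochastic game is strongly ergodic: for every $\varepsilon > 0$ there exists $m_\varepsilon$ such that every history $h_{m_\varepsilon}$ is admissible from every initial belief and $\|b^{b_1}_{h_{m_\varepsilon}} - b^{b_1'}_{h_{m_\varepsilon}}\|_1 \le \varepsilon$ for all initial beliefs $b_1, b_1'$. Then the game satisfies the Doeblin condition with $\delta_\varepsilon = (|\mathcal{I}| |\mathcal{J}| |\mathcal{S}|)^{-(m_\varepsilon - 1)} \mu_\varepsilon$ for some $\mu_\varepsilon > 0$: for every strategy pair $(\sigma, \tau)$ there exists $\bar b \in \Delta(\mathcal{K})$ such that for every initial belief $b$, $\mathbb{P}^b_{\sigma,\tau}(\|B_{m_\varepsilon} - \bar b\|_1 \le \varepsilon) \ge \delta_\varepsilon$. -/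

import Mathlib

/-- Forward product of transition-signal matrices along a history:
`T(h) = P(i₁,j₁,s₂) ⋯ P(i_{m-1},j_{m-1},s_m)`. -/
noncomputable def Tmat {K A : Type*} [Fintype K] [DecidableEq K]
    (P : A → K → K → ℝ) : List A → K → K → ℝ
  | [] => fun k k' => if k = k' then 1 else 0
  | a :: l => fun k k' => ∑ j, P a k j * Tmat P l j k'

/-- Probability weight that the behavior strategies `σ` and `τ` play the actions prescribed by
a given history (continuing from the history `past`): `∏_r σ(h_r)(i_r) τ(h_r)(j_r)`. -/
noncomputable def stratW {I J S : Type*}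
    (σ : List (I × J × S) → I → ℝ) (τ : List (I × J × S) → J → ℝ) :
    List (I × J × S) → List (I × J × S) → ℝ
  | _, [] => 1
  | past, a :: rest => σ past a.1 * τ past a.2.1 * stratW σ τ (past ++ [a]) rest

/-- Probability that the history `h` occurs under strategies `(σ, τ)` from the initial belief
`b`: `(∏_r σ(h_r)(i_r) τ(h_r)(j_r)) ⋅ bᵀ T(h) 𝟙`. -/
noncomputable def histProb {K I J S : Type*} [Fintype K] [DecidableEq K]
    (P : I × J × S → K → K → ℝ)
    (σ : List (I × J × S) → I → ℝ) (τ : List (I × J × S) → J → ℝ)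
    (b : K → ℝ) (h : List (I × J × S)) : ℝ :=
  stratW σ τ [] h * ∑ k, ∑ k', b k * Tmat P h k k'

/-- Posterior belief after the history `h` from the prior `b`:
`b^b_h(k') = (bᵀ T(h))_{k'} / (bᵀ T(h) 𝟙)`. -/
noncomputable def post {K I J S : Type*} [Fintype K] [DecidableEq K]
    (P : I × J × S → K → K → ℝ) (b : K → ℝ) (h : List (I × J × S)) (k' : K) : ℝ :=
  (∑ k, b k * Tmat P h k k') / (∑ k, ∑ k'', b k * Tmat P h k k'')

/-- An argmax of a real-valued function on a nonempty fintype. -/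
noncomputable def argmaxF {I : Type*} [Fintype I] [Nonempty I] (f : I → ℝ) : I :=
  (Finset.univ.exists_max_image f Finset.univ_nonempty).choose

lemma argmaxF_le {I : Type*} [Fintype I] [Nonempty I] (f : I → ℝ) (i : I) :
    f i ≤ f (argmaxF f) := by
  obtain ⟨-, h⟩ := (Finset.univ.exists_max_image f Finset.univ_nonempty).choose_spec
  exact h i (Finset.mem_univ i)

lemma argmaxF_ge {I : Type*} [Fintype I] [Nonempty I] (f : I → ℝ)
    (hsum : ∑ i, f i = 1) : 1 / (Fintype.card I : ℝ) ≤ f (argmaxF f) := by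
  have hc : (0:ℝ) < (Fintype.card I : ℝ) := by
    exact_mod_cast Fintype.card_pos
  rw [div_le_iff₀ hc]
  have h := Finset.sum_le_card_nsmul Finset.univ f (f (argmaxF f))
    (fun i _ => argmaxF_le f i)
  rw [hsum] at h
  simpa [Finset.card_univ, nsmul_eq_mul, mul_comm] using h

/-- Greedy history of length `n` continuing from `past`. -/
noncomputable def greedy {I J S : Type*} [Fintype I] [Nonempty I] [Fintype J] [Nonempty J]
    [Nonempty S] (σ : List (I × J × S) → I → ℝ) (τ : List (I × J × S) → J → ℝ) :
    ℕ → List (I × J × S) → List (I × J × S)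
  | 0, _ => []
  | n+1, past =>
    (argmaxF (σ past), argmaxF (τ past), Classical.arbitrary S) ::
      greedy σ τ n (past ++ [(argmaxF (σ past), argmaxF (τ past), Classical.arbitrary S)])

lemma greedy_length {I J S : Type*} [Fintype I] [Nonempty I] [Fintype J] [Nonempty J]
    [Nonempty S] (σ : List (I × J × S) → I → ℝ) (τ : List (I × J × S) → J → ℝ)
    (n : ℕ) (past : List (I × J × S)) : (greedy σ τ n past).length = n := by
  induction n generalizing past with
  | zero => rfl
  | succ n ih => simp [greedy, ih]

lemma stratW_nonneg {I J S : Type*}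
    (σ : List (I × J × S) → I → ℝ) (τ : List (I × J × S) → J → ℝ)
    (hσ : ∀ h i, 0 ≤ σ h i) (hτ : ∀ h j, 0 ≤ τ h j)
    (h past : List (I × J × S)) : 0 ≤ stratW σ τ past h := by
  induction h generalizing past with
  | nil => simp [stratW]
  | cons a rest ih =>
    exact mul_nonneg (mul_nonneg (hσ _ _) (hτ _ _)) (ih _)

lemma greedy_stratW {I J S : Type*} [Fintype I] [Nonempty I] [Fintype J] [Nonempty J]
    [Nonempty S] (σ : List (I × J × S) → I → ℝ) (τ : List (I × J × S) → J → ℝ)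
    (hσ : ∀ h, (∀ i, 0 ≤ σ h i) ∧ ∑ i, σ h i = 1)
    (hτ : ∀ h, (∀ j, 0 ≤ τ h j) ∧ ∑ j, τ h j = 1)
    (n : ℕ) (past : List (I × J × S)) :
    (1 / ((Fintype.card I : ℝ) * (Fintype.card J : ℝ)))^n ≤
      stratW σ τ past (greedy σ τ n past) := by
  have hcI : (0:ℝ) < (Fintype.card I : ℝ) := by exact_mod_cast Fintype.card_pos
  have hcJ : (0:ℝ) < (Fintype.card J : ℝ) := by exact_mod_cast Fintype.card_pos
  induction n generalizing past with
  | zero => simp [greedy, stratW]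
  | succ n ih =>
    have h1 := argmaxF_ge (σ past) (hσ past).2
    have h2 := argmaxF_ge (τ past) (hτ past).2
    have h3 := ih (past ++ [(argmaxF (σ past), argmaxF (τ past), Classical.arbitrary S)])
    have e : (1 / ((Fintype.card I : ℝ) * (Fintype.card J : ℝ)))^(n+1)
        = (1 / (Fintype.card I : ℝ)) * (1 / (Fintype.card J : ℝ))
          * (1 / ((Fintype.card I : ℝ) * (Fintype.card J : ℝ)))^n := by
      rw [pow_succ]; ring
    rw [e]
    show _ ≤ stratW σ τ past (_ :: _)
    rw [stratW]
    refine mul_le_mul (mul_le_mul h1 h2 (by positivity)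
      (le_trans (by positivity) h1)) h3 (by positivity) ?_
    exact mul_nonneg ((hσ past).1 _) ((hτ past).1 _)

lemma Tmat_nonneg {K A : Type*} [Fintype K] [DecidableEq K]
    (P : A → K → K → ℝ) (hP : ∀ a k k', 0 ≤ P a k k')
    (h : List A) (k k' : K) : 0 ≤ Tmat P h k k' := by
  induction h generalizing k with
  | nil => simp only [Tmat]; split <;> norm_num
  | cons a l ih =>
    exact Finset.sum_nonneg fun j _ => mul_nonneg (hP _ _ _) (ih j)

open Classical in
/-- Strongly ergodic hidden stochastic games satisfy the Doeblin condition, with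
`δ_ε = (|I||J||S|)^{-(m_ε - 1)} μ_ε` for some `μ_ε > 0`. -/
theorem stmt_19 {K I J S : Type*} [Fintype K] [DecidableEq K] [Nonempty K]
    [Fintype I] [Nonempty I] [Fintype J] [Nonempty J] [Fintype S] [Nonempty S]
    (P : I × J × S → K → K → ℝ) (hP : ∀ a k k', 0 ≤ P a k k')
    (hstoc : ∀ (i : I) (j : J) (k : K), ∑ s : S, ∑ k', P (i, j, s) k k' = 1)
    (herg : ∀ ε : ℝ, 0 < ε → ∃ m : ℕ, 1 ≤ m ∧
      ∀ h : List (I × J × S), h.length = m - 1 →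
        (∀ b : K → ℝ, (∀ k, 0 ≤ b k) → ∑ k, b k = 1 →
          0 < ∑ k, ∑ k', b k * Tmat P h k k') ∧
        (∀ b b' : K → ℝ, (∀ k, 0 ≤ b k) → ∑ k, b k = 1 →
          (∀ k, 0 ≤ b' k) → ∑ k, b' k = 1 →
          ∑ k', |post P b h k' - post P b' h k'| ≤ ε)) :
    ∀ ε : ℝ, 0 < ε → ∃ m : ℕ, 1 ≤ m ∧ ∃ μ : ℝ, 0 < μ ∧
      ∀ (σ : List (I × J × S) → I → ℝ) (τ : List (I × J × S) → J → ℝ),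
        (∀ h, (∀ i, 0 ≤ σ h i) ∧ ∑ i, σ h i = 1) →
        (∀ h, (∀ j, 0 ≤ τ h j) ∧ ∑ j, τ h j = 1) →
        ∃ bbar : K → ℝ, (∀ k, 0 ≤ bbar k) ∧ (∑ k, bbar k = 1) ∧
          ∀ b : K → ℝ, (∀ k, 0 ≤ b k) → ∑ k, b k = 1 →
            (1 / ((Fintype.card I : ℝ) * (Fintype.card J : ℝ) * (Fintype.card S : ℝ)))
                ^ (m - 1) * μ ≤
              ∑ a : Fin (m - 1) → I × J × S,
                if ∑ k, |post P b (List.ofFn a) k - bbar k| ≤ ε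
                then histProb P σ τ b (List.ofFn a) else 0 := by
  intro ε hε
  obtain ⟨m, hm, hms⟩ := herg ε hε
  refine ⟨m, hm, ?_⟩
  set n := m - 1 with hn
  -- the uniform lower bound μ on row sums
  set F : ((Fin n → I × J × S) × K) → ℝ :=
    fun p => ∑ k', Tmat P (List.ofFn p.1) p.2 k' with hF
  have hFpos : ∀ p, 0 < F p := by
    rintro ⟨a, k⟩
    have hpos := (hms (List.ofFn a) (by simp [hn])).1
      (fun k'' => if k'' = k then 1 else 0)
      (fun k'' => by by_cases hk : k'' = k <;> simp [hk]) (by simp)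
    simp only [ite_mul, one_mul, zero_mul] at hpos
    rw [Finset.sum_comm] at hpos
    simpa [hF, Finset.sum_ite_eq', Finset.sum_comm] using hpos
  have hne : (Finset.univ : Finset ((Fin n → I × J × S) × K)).Nonempty :=
    Finset.univ_nonempty
  set μ : ℝ := Finset.univ.inf' hne F with hμdef
  have hμ : 0 < μ := (Finset.lt_inf'_iff hne).mpr fun p _ => hFpos p
  refine ⟨μ, hμ, ?_⟩
  intro σ τ hσ hτ
  set hstar : List (I × J × S) := greedy σ τ n [] with hhstar
  have hlen : hstar.length = n := greedy_length σ τ n []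
  set b₀ : K → ℝ := fun _ => (Fintype.card K : ℝ)⁻¹ with hb₀def
  have hcK : (0:ℝ) < (Fintype.card K : ℝ) := by exact_mod_cast Fintype.card_pos
  have hb₀nn : ∀ k, 0 ≤ b₀ k := fun k => by positivity
  have hb₀sum : ∑ k, b₀ k = 1 := by
    simp [hb₀def, Finset.sum_const, Finset.card_univ]
  have hden : 0 < ∑ k, ∑ k'', b₀ k * Tmat P hstar k k'' :=
    (hms hstar (by rw [hlen])).1 b₀ hb₀nn hb₀sum
  refine ⟨post P b₀ hstar, ?_, ?_, ?_⟩
  · intro k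
    exact div_nonneg (Finset.sum_nonneg fun k' _ =>
      mul_nonneg (hb₀nn k') (Tmat_nonneg P hP _ _ _)) hden.le
  · unfold post
    rw [← Finset.sum_div, Finset.sum_comm]
    exact div_self hden.ne'
  · intro b hb hbs
    -- the greedy history as a function
    set astar : Fin n → I × J × S := fun i => hstar.get (Fin.cast hlen.symm i) with hastar
    have hofn : List.ofFn astar = hstar := by
      apply List.ext_get (by simp [hlen])
      intro i h1 h2
      simp [hastar, List.get_ofFn]
    have hterm : (1 / ((Fintype.card I : ℝ) * (Fintype.card J : ℝ)
          * (Fintype.card S : ℝ)))^n * μ ≤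
        (if ∑ k, |post P b (List.ofFn astar) k - post P b₀ hstar k| ≤ ε
          then histProb P σ τ b (List.ofFn astar) else 0) := by
      rw [if_pos (by rw [hofn]; exact (hms hstar (by rw [hlen])).2 b b₀ hb hbs hb₀nn hb₀sum)]
      rw [hofn]
      unfold histProb
      have hcI : (0:ℝ) < (Fintype.card I : ℝ) := by exact_mod_cast Fintype.card_pos
      have hcJ : (0:ℝ) < (Fintype.card J : ℝ) := by exact_mod_cast Fintype.card_pos
      have hcS : (1:ℝ) ≤ (Fintype.card S : ℝ) := by exact_mod_cast Fintype.card_pos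
      have hA : (1 / ((Fintype.card I : ℝ) * (Fintype.card J : ℝ)
            * (Fintype.card S : ℝ)))^n ≤ stratW σ τ [] hstar := by
        refine le_trans (pow_le_pow_left₀ (by positivity) ?_ n)
          (hhstar ▸ greedy_stratW σ τ hσ hτ n [])
        apply one_div_le_one_div_of_le (by positivity)
        nlinarith [mul_le_mul_of_nonneg_left hcS (mul_pos hcI hcJ).le]
      have hB : μ ≤ ∑ k, ∑ k', b k * Tmat P hstar k k' := by
        calc μ = ∑ k, b k * μ := by rw [← Finset.sum_mul, hbs, one_mul]
        _ ≤ ∑ k, b k * (∑ k', Tmat P hstar k k') := by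
            refine Finset.sum_le_sum fun k _ => mul_le_mul_of_nonneg_left ?_ (hb k)
            rw [← hofn]
            exact Finset.inf'_le F (Finset.mem_univ (astar, k))
        _ = ∑ k, ∑ k', b k * Tmat P hstar k k' := by simp [Finset.mul_sum]
      exact mul_le_mul hA hB hμ.le
        (stratW_nonneg σ τ (fun h => (hσ h).1) (fun h => (hτ h).1) _ _)
    refine le_trans hterm (Finset.single_le_sum
      (f := fun a => if ∑ k, |post P b (List.ofFn a) k - post P b₀ hstar k| ≤ ε
        then histProb P σ τ b (List.ofFn a) else 0)
      (fun a _ => ?_) (Finset.mem_univ astar))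
    split
    · exact mul_nonneg
        (stratW_nonneg σ τ (fun h => (hσ h).1) (fun h => (hτ h).1) _ _)
        (Finset.sum_nonneg fun k _ => Finset.sum_nonneg fun k' _ =>
          mul_nonneg (hb k) (Tmat_nonneg P hP _ _ _))
    · exact le_refl 0
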